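/- arXiv:1502.02942 — 2 statements merged into one kernel-verified Lean document; each statement's English description precedes it below -/
import Mathlib

section
/- Equivalence theorem: B is a skipping simulation on a transition system M if and only if B is a well-founded skipping relation on M. -/
universe u v

section Defs

variable {S : Type u} {T : Type v}

/-- A fullpath of the transition relation `R`. -/
def FullPath (R : S → S → Prop) (σ : ℕ → S) : Prop := ∀ i, R (σ i) (σ (i+1))

/-- Strictly increasing sequences of naturals starting at 0. -/
def IsINC (π : ℕ → ℕ) : Prop := StrictMono π ∧ π 0 = 0

/-- Every element of the i-th segment of `σ` (w.r.t. `π`) is `B`-related to the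
first element of the i-th segment of `δ` (w.r.t. `ξ`). -/
def Corr (B : S → T → Prop) (σ : ℕ → S) (π : ℕ → ℕ) (δ : ℕ → T) (ξ : ℕ → ℕ) : Prop :=
  ∀ i n, π i ≤ n → n < π (i+1) → B (σ n) (δ (ξ i))

/-- `σ` matches `δ` under `B`. -/
def Match (B : S → T → Prop) (σ : ℕ → S) (δ : ℕ → T) : Prop :=
  ∃ π ξ, IsINC π ∧ IsINC ξ ∧ Corr B σ π δ ξ

/-- Skipping simulation. -/
def IsSKS {Lbl : Type v} (R : S → S → Prop) (L : S → Lbl) (B : S → S → Prop) : Prop :=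
  ∀ s w, B s w →
    L s = L w ∧
    ∀ σ, FullPath R σ → σ 0 = s → ∃ δ, FullPath R δ ∧ δ 0 = w ∧ Match B σ δ

/-- Well-founded skipping relation. -/
def IsWFSK {Lbl : Type v} (R : S → S → Prop) (L : S → Lbl) (B : S → S → Prop) : Prop :=
  (∀ s w, B s w → L s = L w) ∧
  ∃ (W : Type u) (lt : W → W → Prop) (_ : WellFounded lt)
    (rankt : S → S → W) (rankl : S → S → S → ℕ),
    ∀ s u w, R s u → B s w →
      (∃ v, R w v ∧ B u v) ∨
      (B u w ∧ lt (rankt u w) (rankt s w)) ∨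
      (∃ v, R w v ∧ B s v ∧ rankl v s u < rankl w s u) ∨
      (∃ v, (∃ x, R w x ∧ Relation.TransGen R x v) ∧ B u v)

/-- Reduced well-founded skipping relation. -/
def IsRWFSK {Lbl : Type v} (R : S → S → Prop) (L : S → Lbl) (B : S → S → Prop) : Prop :=
  (∀ s w, B s w → L s = L w) ∧
  ∃ (W : Type u) (lt : W → W → Prop) (_ : WellFounded lt) (rankt : S → S → W),
    ∀ s u w, R s u → B s w →
      (B u w ∧ lt (rankt u w) (rankt s w)) ∨
      (∃ v, Relation.TransGen R w v ∧ B u v)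

/-- Nodes of the computation tree of `R` rooted at `s`, represented as the finite
path from the root. -/
def CtreeNode (R : S → S → Prop) (s : S) (l : List S) : Prop :=
  l.head? = some s ∧ l.Chain' R

/-- Nodes of the tree `ranktCt(M,s,w)`: empty if `¬ B s w`; otherwise the largest
subtree of `ctree(M,s)` all of whose non-root nodes `⟨s,…,x⟩` satisfy `x B w` and
`¬ (x B v)` for every `v` with `w →⁺ v`. -/
def RanktCtNode (R : S → S → Prop) (B : S → S → Prop) (s w : S) (l : List S) : Prop :=
  B s w ∧ CtreeNode R s l ∧
  ∀ x ∈ l.tail, B x w ∧ ∀ v, Relation.TransGen R w v → ¬ B x v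

/-- `c` is a child of `p` in the tree with node-predicate `T'`. -/
def ChildRel (T' : List S → Prop) (c p : List S) : Prop :=
  T' c ∧ T' p ∧ ∃ v, c = p ++ [v]

-- The ordinal `size` of a node of a tree all of whose paths are finite:
-- `size(t,x) = ⋃_{c child of x} (size(t,c)+1)`.
open Classical in
noncomputable def nodeSize (T' : List S → Prop) (l : List S) : Ordinal.{u} :=
  if h : WellFounded (ChildRel T') then (h.apply l).rank else 0

/-- `size(ranktCt(M,s,w))`: the size of the root `⟨s⟩`. -/
noncomputable def treeSize (R : S → S → Prop) (B : S → S → Prop) (s w : S) : Ordinal.{u} :=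
  nodeSize (RanktCtNode R B s w) [s]


/-!
Both notions are equivalent to the reduced relation `IsRWFSK`, in which a step `s → u` from
`s B w` is answered either by stuttering (`u B w` with smaller `rankt`) or by a nonempty path
`w →⁺ v` with `u B v`. A WFSK is reduced because clause (c) can only be iterated finitely often,
by `rankl`. For a reduced relation, a path matching a fullpath `σ` is glued from the nonempty
answers, and there are infinitely many of them since `rankt` cannot decrease forever.
Conversely, an SKS is reduced with `rankt u w := (u, w)`, ordered by the stuttering steps after
which no strict successor of `w` is related to `u`: an infinite descending chain would be a
fullpath from `s` that no path from `w` matches.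
-/

open Relation

section Development

variable {S : Type u}

section Paths

variable {R : S → S → Prop}

theorem FullPath.transGen {δ : ℕ → S} (h : FullPath R δ) {a b : ℕ} (hab : a < b) :
    TransGen R (δ a) (δ b) :=
  Nat.rel_of_forall_rel_succ_of_lt _ (fun n => .single (h n)) hab

theorem exists_fullPath_of_rel (hR : ∀ s, ∃ u, R s u) {s u : S} (h : R s u) :
    ∃ σ, FullPath R σ ∧ σ 0 = s ∧ σ 1 = u := by
  choose next hnext using hR
  refine ⟨fun n => Nat.casesOn n s fun k => next^[k] u, ?_, rfl, rfl⟩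
  rintro (_ | k)
  · exact h
  · simp only [Function.iterate_succ_apply']
    exact hnext _

theorem Relation.TransGen.exists_path {x y : S} (h : TransGen R x y) :
    ∃ n, ∃ f : ℕ → S, 0 < n ∧ f 0 = x ∧ f n = y ∧ ∀ j < n, R (f j) (f (j + 1)) := by
  induction h with
  | @single y hxy => exact ⟨1, fun j => if j = 0 then x else y, one_pos, rfl, rfl, by simpa⟩
  | @tail b c _ hbc ih =>
    obtain ⟨n, f, hn, hf0, hfn, hf⟩ := ih
    refine ⟨n + 1, fun j => if j ≤ n then f j else c, n.succ_pos, by simpa, by simp, ?_⟩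
    intro j hj
    rcases Nat.lt_succ_iff_lt_or_eq.1 hj with hj | rfl
    · simpa [hj.le, Nat.succ_le_of_lt hj] using hf j hj
    · simpa [hfn] using hbc

theorem IsINC.exists_segment {π : ℕ → ℕ} (hπ : IsINC π) (n : ℕ) :
    ∃ i, π i ≤ n ∧ n < π (i + 1) := by
  have hex : ∃ i, n < π (i + 1) := ⟨n, hπ.1.le_apply⟩
  refine ⟨Nat.find hex, ?_, Nat.find_spec hex⟩
  rcases h : Nat.find hex with _ | i
  · rw [hπ.2]
    exact n.zero_le
  · exact not_lt.1 (Nat.find_min hex (h ▸ i.lt_succ_self))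

theorem StrictMono.segment_eq {π : ℕ → ℕ} (hπ : StrictMono π) {i j n : ℕ} (hi : π i ≤ n)
    (hi' : n < π (i + 1)) (hj : π j ≤ n) (hj' : n < π (j + 1)) : i = j := by
  have := hπ.lt_iff_lt.1 (hi.trans_lt hj')
  have := hπ.lt_iff_lt.1 (hj.trans_lt hi')
  omega

theorem exists_fullPath_through {a : ℕ → S} (h : ∀ i, TransGen R (a i) (a (i + 1))) :
    ∃ δ ξ, FullPath R δ ∧ IsINC ξ ∧ ∀ i, δ (ξ i) = a i := by
  choose n f hn hf0 hfn hf using fun i => (h i).exists_path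
  set ξ : ℕ → ℕ := fun i => ∑ j ∈ Finset.range i, n j
  have hξsucc (i : ℕ) : ξ (i + 1) = ξ i + n i := Finset.sum_range_succ _ _
  have hξ : IsINC ξ :=
    ⟨strictMono_nat_of_lt_succ fun i => hξsucc i ▸ Nat.lt_add_of_pos_right (hn i),
      Finset.sum_range_zero _⟩
  choose idx hidx using hξ.exists_segment
  have idx_eq {i k : ℕ} (h₁ : ξ i ≤ k) (h₂ : k < ξ (i + 1)) : idx k = i :=
    hξ.1.segment_eq (hidx k).1 (hidx k).2 h₁ h₂
  refine ⟨fun k => f (idx k) (k - ξ (idx k)), ξ, fun k => ?_, hξ, fun i => ?_⟩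
  · obtain ⟨h₁, h₂⟩ := hidx k
    have hlen := hξsucc (idx k)
    dsimp only
    obtain h₃ | h₃ : k + 1 < ξ (idx k + 1) ∨ k + 1 = ξ (idx k + 1) := by omega
    · rw [idx_eq (i := idx k) (by omega) h₃, Nat.sub_add_comm h₁]
      exact hf _ _ (by omega)
    · rw [idx_eq (i := idx k + 1) h₃.ge (by rw [hξsucc]; have := hn (idx k + 1); omega),
        ← h₃, Nat.sub_self, hf0, ← hfn]
      convert hf (idx k) (k - ξ (idx k)) (by omega) using 2
      omega
  · simp only [idx_eq le_rfl (hξ.1 i.lt_succ_self), Nat.sub_self, hf0]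

end Paths

section Match

variable {T : Type*} {B : S → T → Prop} {σ : ℕ → S} {δ : ℕ → T}

theorem Match.exists_rel (h : Match B σ δ) (n : ℕ) : ∃ k, B (σ n) (δ k) := by
  obtain ⟨π, ξ, hπ, -, hc⟩ := h
  obtain ⟨i, h₁, h₂⟩ := hπ.exists_segment n
  exact ⟨ξ i, hc i n h₁ h₂⟩

theorem Match.exists_rel_of_pos (h : Match B σ δ) : ∃ n k, 0 < n ∧ 0 < k ∧ B (σ n) (δ k) := by
  obtain ⟨π, ξ, hπ, hξ, hc⟩ := h
  refine ⟨π 1, ξ 1, ?_, ?_, hc 1 (π 1) le_rfl (hπ.1 one_lt_two)⟩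
  · simpa [hπ.2] using hπ.1 zero_lt_one
  · simpa [hξ.2] using hξ.1 zero_lt_one

end Match

section Skipping

variable {Lbl : Type v} {R B : S → S → Prop} {L : S → Lbl}

def StutterStep (R B : S → S → Prop) (p q : S × S) : Prop :=
  p.2 = q.2 ∧ R q.1 p.1 ∧ B q.1 q.2 ∧ ∀ v, TransGen R q.2 v → ¬ B p.1 v

theorem IsSKS.wellFounded_stutterStep (h : IsSKS R L B) : WellFounded (StutterStep R B) := by
  refine wellFounded_iff_isEmpty_descending_chain.2 ⟨fun ⟨f, hf⟩ => ?_⟩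
  have hw (n : ℕ) : (f n).2 = (f 0).2 := by
    induction n with
    | zero => rfl
    | succ n ih => rw [(hf n).1, ih]
  obtain ⟨δ, hδ, hδ0, hm⟩ := (h _ _ (hf 0).2.2.1).2 (fun n => (f n).1) (fun n => (hf n).2.1) rfl
  obtain ⟨_ | n, k, hn, hk, hB⟩ := hm.exists_rel_of_pos
  · exact absurd hn (lt_irrefl 0)
  · exact (hf n).2.2.2 (δ k) (by rw [hw n, ← hδ0]; exact hδ.transGen hk) hB

theorem IsSKS.isRWFSK (hR : ∀ s, ∃ u, R s u) (h : IsSKS R L B) : IsRWFSK R L B := by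
  refine ⟨fun s w hsw => (h s w hsw).1, S × S, StutterStep R B, h.wellFounded_stutterStep,
    Prod.mk, fun s u w hsu hsw => ?_⟩
  by_cases hesc : ∃ v, TransGen R w v ∧ B u v
  · exact Or.inr hesc
  obtain ⟨σ, hσ, rfl, rfl⟩ := exists_fullPath_of_rel hR hsu
  obtain ⟨δ, hδ, rfl, hm⟩ := (h _ _ hsw).2 σ hσ rfl
  obtain ⟨_ | k, hk⟩ := hm.exists_rel 1
  · exact Or.inl ⟨hk, rfl, hsu, hsw, fun v hv hBv => hesc ⟨v, hv, hBv⟩⟩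
  · exact absurd ⟨_, hδ.transGen k.succ_pos, hk⟩ hesc

theorem IsWFSK.isRWFSK (h : IsWFSK R L B) : IsRWFSK R L B := by
  obtain ⟨hL, W, lt, hwf, rankt, rankl, hmain⟩ := h
  refine ⟨hL, W, lt, hwf, rankt, fun s u w hsu => ?_⟩
  induction w using (measure fun w => rankl w s u).wf.induction with
  | _ w ih =>
  intro hsw
  rcases hmain s u w hsu hsw with
    ⟨v, hwv, huv⟩ | hstut | ⟨v, hwv, hsv, hlt⟩ | ⟨v, ⟨x, hwx, hxv⟩, huv⟩
  · exact Or.inr ⟨v, .single hwv, huv⟩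
  · exact Or.inl hstut
  · rcases ih v hlt hsv with ⟨huv, -⟩ | ⟨v', hvv', huv'⟩
    · exact Or.inr ⟨v, .single hwv, huv⟩
    · exact Or.inr ⟨v', .head hwv hvv', huv'⟩
  · exact Or.inr ⟨v, .head hwx hxv, huv⟩

theorem IsRWFSK.isWFSK (h : IsRWFSK R L B) : IsWFSK R L B := by
  obtain ⟨hL, W, lt, hwf, rankt, hstep⟩ := h
  refine ⟨hL, W, lt, hwf, rankt, fun _ _ _ => 0, fun s u w hsu hsw => ?_⟩
  rcases hstep s u w hsu hsw with hstut | ⟨v, hwv, huv⟩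
  · exact Or.inr (Or.inl hstut)
  obtain ⟨x, hwx, hxv⟩ := TransGen.head'_iff.1 hwv
  rcases reflTransGen_iff_eq_or_transGen.1 hxv with rfl | hxv
  · exact Or.inl ⟨_, hwx, huv⟩
  · exact Or.inr (Or.inr (Or.inr ⟨v, ⟨x, hwx, hxv⟩, huv⟩))

theorem FullPath.exists_segment_rel {W : Type*} {lt : W → W → Prop} (hwf : WellFounded lt)
    {rankt : S → S → W}
    (hstep : ∀ s u w, R s u → B s w →
      (B u w ∧ lt (rankt u w) (rankt s w)) ∨ ∃ v, TransGen R w v ∧ B u v)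
    {σ : ℕ → S} (hσ : FullPath R σ) (x : S) (n : ℕ) (hB : B (σ n) x) :
    ∃ m y, n < m ∧ TransGen R x y ∧ B (σ m) y ∧ ∀ k, n ≤ k → k < m → B (σ k) x := by
  induction n using (InvImage.wf (fun n => rankt (σ n) x) hwf).induction with
  | _ n ih =>
  rcases hstep _ _ _ (hσ n) hB with ⟨hB', hlt⟩ | ⟨y, hxy, hBy⟩
  · obtain ⟨m, y, hm, hxy, hBy, hseg⟩ := ih (n + 1) hlt hB'
    refine ⟨m, y, by omega, hxy, hBy, fun k hk hkm => ?_⟩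
    rcases hk.eq_or_lt with rfl | hk
    · exact hB
    · exact hseg k hk hkm
  · refine ⟨n + 1, y, n.lt_succ_self, hxy, hBy, fun k hk hkm => ?_⟩
    obtain rfl : k = n := by omega
    exact hB

theorem IsRWFSK.isSKS (h : IsRWFSK R L B) : IsSKS R L B := by
  obtain ⟨hL, W, lt, hwf, rankt, hstep⟩ := h
  intro s w hsw
  refine ⟨hL s w hsw, fun σ hσ hσ0 => ?_⟩
  have hnext (p : {p : ℕ × S // B (σ p.1) p.2}) : ∃ q : {q : ℕ × S // B (σ q.1) q.2},
      p.1.1 < q.1.1 ∧ TransGen R p.1.2 q.1.2 ∧ ∀ k, p.1.1 ≤ k → k < q.1.1 → B (σ k) p.1.2 := by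
    obtain ⟨m, y, hm, hxy, hBy, hseg⟩ := FullPath.exists_segment_rel hwf hstep hσ p.1.2 p.1.1 p.2
    exact ⟨⟨(m, y), hBy⟩, hm, hxy, hseg⟩
  choose next hnext using hnext
  -- `anchor i = (π i, a i)`: where the `i`-th segment of `σ` starts and the state it is matched to
  set anchor : ℕ → {p : ℕ × S // B (σ p.1) p.2} := fun i => next^[i] ⟨(0, w), hσ0 ▸ hsw⟩
  have hsucc (i : ℕ) : anchor (i + 1) = next (anchor i) := Function.iterate_succ_apply' _ _ _
  obtain ⟨δ, ξ, hδ, hξ, hδξ⟩ := exists_fullPath_through (a := fun i => (anchor i).1.2)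
    fun i => hsucc i ▸ (hnext _).2.1
  refine ⟨δ, hδ, hξ.2 ▸ hδξ 0, fun i => (anchor i).1.1, ξ,
    ⟨strictMono_nat_of_lt_succ fun i => hsucc i ▸ (hnext _).1, rfl⟩, hξ, fun i k h₁ h₂ => ?_⟩
  rw [hδξ]
  exact (hnext (anchor i)).2.2 k h₁ (hsucc i ▸ h₂)

end Skipping

end Development

/-- Equivalence: `B` is an SKS on a transition system iff `B` is a WFSK on it. -/
theorem sks_iff_wfsk {S : Type u} {Lbl : Type v}
    (R : S → S → Prop) (L : S → Lbl) (hR : ∀ s, ∃ u, R s u)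
    (B : S → S → Prop) : IsSKS R L B ↔ IsWFSK R L B :=
  ⟨fun h => (h.isRWFSK hR).isWFSK, fun h => h.isRWFSK.isSKS⟩
end Defs
end

section
/- If sBw, s → u, and u (i.e., the node ⟨s,u⟩) is in ranktCt(M,s,w), then size(ranktCt(M,u,w)) < size(ranktCt(M,s,w)) as ordinals. -/
universe u v

section Defs

variable {S : Type u} {T : Type v}

/-!
Every branch of `ranktCt(M,s,w)` is finite: the states along an infinite branch form a fullpath
all of whose states are `B`-related to `w` but to no `v` with `w →⁺ v`, while the skipping
simulation matches that fullpath with one from `w` whose second segment starts at such a `v`.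
Hence sizes are well-defined ranks. Prefixing `s` identifies `ranktCt(M,u,w)` with the subtree of
`ranktCt(M,s,w)` below `⟨s,u⟩`, so the two have the same size, which is smaller than the size of
the parent `⟨s⟩`.
-/

theorem Acc.rank_eq_of_bisim {α β : Type u} {r : α → α → Prop} {r' : β → β → Prop}
    (E : α → β → Prop)
    (forth : ∀ a b a', E a b → r a' a → ∃ b', r' b' b ∧ E a' b')
    (back : ∀ a b b', E a b → r' b' b → ∃ a', r a' a ∧ E a' b')
    {a : α} {b : β} (ha : Acc r a) (hb : Acc r' b) (hab : E a b) : ha.rank = hb.rank := by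
  induction ha generalizing b with
  | intro a ha ih =>
    rw [Acc.rank_eq, Acc.rank_eq]
    apply le_antisymm
    · refine Ordinal.iSup_le fun ⟨a', ha'⟩ => ?_
      obtain ⟨b', hb', hE⟩ := forth a b a' hab ha'
      rw [ih a' ha' (hb.inv hb') hE]
      exact Ordinal.le_iSup (fun c : {c // r' c b} => Order.succ (hb.inv c.2).rank) ⟨b', hb'⟩
    · refine Ordinal.iSup_le fun ⟨b', hb'⟩ => ?_
      obtain ⟨a', ha', hE⟩ := back a b b' hab hb'
      rw [← ih a' ha' (hb.inv hb') hE]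
      exact Ordinal.le_iSup (fun c : {c // r c a} => Order.succ (Acc.inv (Acc.intro a ha) c.2).rank)
        ⟨a', ha'⟩

section Tree

variable {S : Type u} {T T' : List S → Prop}

theorem nodeSize_lt_of_childRel (hT : WellFounded (ChildRel T)) {c p : List S}
    (h : ChildRel T c p) : nodeSize T c < nodeSize T p := by
  simp only [nodeSize, dif_pos hT]
  exact (hT.apply p).rank_lt_of_rel h

theorem ChildRel.exists_append_of_forall_iff {p p' : List S}
    (h : ∀ t, T' (p' ++ t) ↔ T (p ++ t)) {c t : List S} (hc : ChildRel T' c (p' ++ t)) :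
    ∃ t', c = p' ++ t' ∧ ChildRel T (p ++ t') (p ++ t) := by
  obtain ⟨hc, ht, v, rfl⟩ := hc
  refine ⟨t ++ [v], List.append_assoc .., ?_, (h t).mp ht, v, (List.append_assoc ..).symm⟩
  rw [← h, ← List.append_assoc]
  exact hc

theorem nodeSize_append_eq_of_forall_iff (hT : WellFounded (ChildRel T))
    (hT' : WellFounded (ChildRel T')) {p p' : List S} (h : ∀ t, T' (p' ++ t) ↔ T (p ++ t))
    (t : List S) : nodeSize T' (p' ++ t) = nodeSize T (p ++ t) := by
  simp only [nodeSize, dif_pos hT, dif_pos hT']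
  refine Acc.rank_eq_of_bisim (fun c d => ∃ t, c = p' ++ t ∧ d = p ++ t) ?_ ?_ _ _ ⟨t, rfl, rfl⟩
  · rintro _ _ c ⟨t, rfl, rfl⟩ hc
    obtain ⟨t', rfl, hc'⟩ := hc.exists_append_of_forall_iff h
    exact ⟨_, hc', t', rfl, rfl⟩
  · rintro _ _ d ⟨t, rfl, rfl⟩ hd
    obtain ⟨t', rfl, hd'⟩ := hd.exists_append_of_forall_iff fun t => (h t).symm
    exact ⟨_, hd', t', rfl, rfl⟩

end Tree

section Simulation

variable {S : Type u} {Lbl : Type v} {R B : S → S → Prop} {L : S → Lbl}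

theorem FullPath.transGen_of_lt {σ : ℕ → S} (hσ : FullPath R σ) {m n : ℕ} (hmn : m < n) :
    Relation.TransGen R (σ m) (σ n) := by
  induction n, hmn using Nat.le_induction with
  | base => exact .single (hσ m)
  | succ n _ ih => exact ih.tail (hσ n)

theorem IsSKS.exists_transGen_rel (h : IsSKS R L B) {σ : ℕ → S} {w : S} (hσ : FullPath R σ)
    (hσw : B (σ 0) w) : ∃ n v, Relation.TransGen R w v ∧ B (σ n) v := by
  obtain ⟨δ, hδ, rfl, π, ξ, hπ, hξ, hcorr⟩ := (h _ _ hσw).2 σ hσ rfl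
  have hξ1 : 0 < ξ 1 := hξ.2 ▸ hξ.1 Nat.zero_lt_one
  exact ⟨π 1, δ (ξ 1), hδ.transGen_of_lt hξ1, hcorr 1 (π 1) le_rfl (hπ.1 Nat.one_lt_two)⟩

theorem wellFounded_childRel_ranktCtNode (h : IsSKS R L B) (s w : S) :
    WellFounded (ChildRel (RanktCtNode R B s w)) := by
  rw [wellFounded_iff_isEmpty_descending_chain, isEmpty_subtype]
  intro f hf
  choose v hv using fun n => (hf n).2.2
  have hne : ∀ n, f n ≠ [] := fun n hn => by simpa [hn] using (hf n).2.1.2.1.1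
  have hpath : FullPath R v := fun n => by
    have hchain := (hf (n + 1)).1.2.1.2
    rw [hv (n + 1), hv n, List.append_assoc, List.singleton_append] at hchain
    exact (List.isChain_append_cons_cons.mp hchain).2.1
  have hv_tail : ∀ n, v n ∈ (f (n + 1)).tail := fun n => by
    rw [hv n, List.tail_append_of_ne_nil (hne n)]
    exact List.mem_append_right _ (List.mem_singleton_self _)
  have hv_good := fun n => (hf n).1.2.2 (v n) (hv_tail n)
  obtain ⟨n, y, hwy, hy⟩ := h.exists_transGen_rel hpath (hv_good 0).1
  exact (hv_good n).2 y hwy hy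

theorem RanktCtNode.cons_iff {s u w : S} (hnode : RanktCtNode R B s w [s, u]) (t : List S) :
    RanktCtNode R B u w (u :: t) ↔ RanktCtNode R B s w (s :: u :: t) := by
  obtain ⟨hsw, ⟨-, hsu⟩, hu⟩ := hnode
  have hu := hu u (List.mem_singleton_self u)
  constructor
  · rintro ⟨-, ⟨-, hchain⟩, ht⟩
    exact ⟨hsw, ⟨rfl, List.isChain_cons_cons.mpr ⟨(List.isChain_cons_cons.mp hsu).1, hchain⟩⟩,
      List.forall_mem_cons.mpr ⟨hu, ht⟩⟩
  · rintro ⟨-, ⟨-, hchain⟩, ht⟩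
    exact ⟨hu.1, ⟨rfl, (List.isChain_cons_cons.mp hchain).2⟩, (List.forall_mem_cons.mp ht).2⟩

end Simulation

theorem treeSize_lt_of_child_general {S : Type u} {Lbl : Type v}
    (R : S → S → Prop) (L : S → Lbl)
    (B : S → S → Prop) (h : IsSKS R L B) (s u w : S)
    (hsw : B s w) (hnode : RanktCtNode R B s w [s, u]) :
    treeSize R B u w < treeSize R B s w := by
  have hWs := wellFounded_childRel_ranktCtNode h s w
  have hroot : RanktCtNode R B s w [s] := ⟨hsw, ⟨rfl, .singleton s⟩, by simp⟩
  calc treeSize R B u w = nodeSize (RanktCtNode R B s w) [s, u] :=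
        nodeSize_append_eq_of_forall_iff hWs (wellFounded_childRel_ranktCtNode h u w)
          (p' := [u]) (p := [s, u]) hnode.cons_iff []
    _ < treeSize R B s w := nodeSize_lt_of_childRel hWs ⟨hnode, hroot, u, rfl⟩

/-- If `s B w`, `s → u`, and the node `⟨s,u⟩` is in `ranktCt(M,s,w)`,
then `size(ranktCt(M,u,w)) < size(ranktCt(M,s,w))` as ordinals. -/
theorem treeSize_lt_of_child {S : Type u} {Lbl : Type v}
    (R : S → S → Prop) (L : S → Lbl) (hR : ∀ s, ∃ u, R s u)
    (B : S → S → Prop) (h : IsSKS R L B) (s u w : S)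
    (hsw : B s w) (hsu : R s u) (hnode : RanktCtNode R B s w [s, u]) :
    treeSize R B u w < treeSize R B s w :=
  treeSize_lt_of_child_general R L B h s u w hsw hnode
end Defs
end
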